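/- Define C_N ⊆ M_n(F((t))) to be the set of r such that there is no nontrivial unipotent radical U' ⊆ GL_n(F) with ru − r ∈ r·t·M_n(F[[t]]) + t^N·M_n(F[[t]]) for all u ∈ U'. Then C_N is invariant under left and right multiplication by GL_n(F[[t]]) and under translation by t^N M_n(F[[t]]): r ∈ C_N if and only if g_1 r g_2 + t^N m ∈ C_N for any g_1, g_2 ∈ GL_n(F[[t]]) and m ∈ M_n(F[[t]]). -/

import Mathlib

noncomputable section

variable (F : Type*) [Field F] (n : ℕ)

/-- Entrywise inclusion `M_n(F[[t]]) → M_n(F((t)))`. -/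
def matK (A : Matrix (Fin n) (Fin n) (PowerSeries F)) :
    Matrix (Fin n) (Fin n) (LaurentSeries F) :=
  A.map (algebraMap (PowerSeries F) (LaurentSeries F))

/-- Entrywise embedding of constant matrices `M_n(F) → M_n(F((t)))`. -/
def matFK (A : Matrix (Fin n) (Fin n) F) : Matrix (Fin n) (Fin n) (LaurentSeries F) :=
  A.map (algebraMap F (LaurentSeries F))

/-- A (unipotent radical of a proper parabolic is in particular a) nontrivial subgroup of
`GL_n(F)` all of whose elements are unipotent. -/
def IsUnipotentSubgroup (U' : Subgroup (Matrix (Fin n) (Fin n) F)ˣ) : Prop :=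
  U' ≠ ⊥ ∧ ∀ u ∈ U', ((u : Matrix (Fin n) (Fin n) F) - 1) ^ n = 0

/-- The set `C_N ⊆ M_n(F((t)))`: those `r` for which there is **no** nontrivial unipotent
subgroup `U' ⊆ GL_n(F)` with `ru − r ∈ r·t·M_n(F[[t]]) + t^N·M_n(F[[t]])` for all
`u ∈ U'`. -/
def InCN (N : ℕ) (r : Matrix (Fin n) (Fin n) (LaurentSeries F)) : Prop :=
  ¬ ∃ U' : Subgroup (Matrix (Fin n) (Fin n) F)ˣ, IsUnipotentSubgroup F n U' ∧
    ∀ u ∈ U', ∃ m₁ m₂ : Matrix (Fin n) (Fin n) (PowerSeries F),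
      r * matFK F n (u : Matrix (Fin n) (Fin n) F) - r =
        r * matK F n ((PowerSeries.X : PowerSeries F) • m₁) +
          matK F n ((PowerSeries.X : PowerSeries F) ^ N • m₂)

/-! ### Auxiliary machinery -/

/-- The negated existential inside `InCN`. -/
def Pprop (N : ℕ) (r : Matrix (Fin n) (Fin n) (LaurentSeries F)) : Prop :=
  ∃ U' : Subgroup (Matrix (Fin n) (Fin n) F)ˣ, IsUnipotentSubgroup F n U' ∧
    ∀ u ∈ U', ∃ m₁ m₂ : Matrix (Fin n) (Fin n) (PowerSeries F),
      r * matFK F n (u : Matrix (Fin n) (Fin n) F) - r =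
        r * matK F n ((PowerSeries.X : PowerSeries F) • m₁) +
          matK F n ((PowerSeries.X : PowerSeries F) ^ N • m₂)

lemma InCN_iff (N : ℕ) (r : Matrix (Fin n) (Fin n) (LaurentSeries F)) :
    InCN F n N r ↔ ¬ Pprop F n N r := Iff.rfl

/-- `matK` as a ring hom. -/
def ΨK : Matrix (Fin n) (Fin n) (PowerSeries F) →+* Matrix (Fin n) (Fin n) (LaurentSeries F) :=
  (algebraMap (PowerSeries F) (LaurentSeries F)).mapMatrix

/-- `F → F[[t]]` entrywise as a ring hom. -/
def ΨP : Matrix (Fin n) (Fin n) F →+* Matrix (Fin n) (Fin n) (PowerSeries F) :=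
  (algebraMap F (PowerSeries F)).mapMatrix

lemma matK_def (A : Matrix (Fin n) (Fin n) (PowerSeries F)) : matK F n A = ΨK F n A := rfl

lemma matFK_eq (A : Matrix (Fin n) (Fin n) F) : matFK F n A = ΨK F n (ΨP F n A) := by
  have key : ∀ a : F, algebraMap F (LaurentSeries F) a
      = algebraMap (PowerSeries F) (LaurentSeries F) (algebraMap F (PowerSeries F) a) :=
    fun a => rfl
  refine Matrix.ext fun i j => ?_
  simp only [matFK, ΨK, ΨP, RingHom.mapMatrix_apply, Matrix.map_apply]
  exact key (A i j)

/-- Left multiplication invariance. -/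
lemma Pprop_left (N : ℕ) (r : Matrix (Fin n) (Fin n) (LaurentSeries F))
    (g : (Matrix (Fin n) (Fin n) (PowerSeries F))ˣ) (h : Pprop F n N r) :
    Pprop F n N (matK F n (g : Matrix (Fin n) (Fin n) (PowerSeries F)) * r) := by
  obtain ⟨U', hU, h⟩ := h
  refine ⟨U', hU, fun u hu => ?_⟩
  obtain ⟨m₁, m₂, hm⟩ := h u hu
  refine ⟨m₁, (g : Matrix (Fin n) (Fin n) (PowerSeries F)) * m₂, ?_⟩
  simp only [matK_def] at hm ⊢
  calc ΨK F n ↑g * r * matFK F n ↑u - ΨK F n ↑g * r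
      = ΨK F n ↑g * (r * matFK F n ↑u - r) := by rw [mul_sub, mul_assoc]
    _ = ΨK F n ↑g * (r * ΨK F n ((PowerSeries.X : PowerSeries F) • m₁) +
          ΨK F n ((PowerSeries.X : PowerSeries F) ^ N • m₂)) := by rw [hm]
    _ = ΨK F n ↑g * r * ΨK F n ((PowerSeries.X : PowerSeries F) • m₁) +
          ΨK F n ((PowerSeries.X : PowerSeries F) ^ N • (↑g * m₂)) := by
        rw [mul_add, ← mul_assoc, ← map_mul, mul_smul_comm]

/-- Translation invariance. -/
lemma Pprop_trans (N : ℕ) (r : Matrix (Fin n) (Fin n) (LaurentSeries F))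
    (m : Matrix (Fin n) (Fin n) (PowerSeries F)) (h : Pprop F n N r) :
    Pprop F n N (r + matK F n ((PowerSeries.X : PowerSeries F) ^ N • m)) := by
  obtain ⟨U', hU, h⟩ := h
  refine ⟨U', hU, fun u hu => ?_⟩
  obtain ⟨m₁, m₂, hm⟩ := h u hu
  refine ⟨m₁, m₂ + m * (ΨP F n ↑u - 1) - (PowerSeries.X : PowerSeries F) • (m * m₁), ?_⟩
  simp only [matK_def, matFK_eq] at hm ⊢
  have e1 : (r + ΨK F n ((PowerSeries.X : PowerSeries F) ^ N • m)) * ΨK F n (ΨP F n ↑u)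
      - (r + ΨK F n ((PowerSeries.X : PowerSeries F) ^ N • m))
      = (r * ΨK F n (ΨP F n ↑u) - r)
        + ΨK F n (((PowerSeries.X : PowerSeries F) ^ N • m) * (ΨP F n ↑u - 1)) := by
    rw [map_mul, map_sub, map_one, mul_sub, mul_one, add_mul]; abel
  rw [e1, hm]
  conv_rhs => rw [add_mul, ← map_mul]
  rw [add_assoc, add_assoc]
  congr 1
  rw [← map_add, ← map_add]
  congr 1
  simp only [smul_mul_assoc, mul_smul_comm, smul_smul, smul_add, smul_sub]
  rw [mul_comm (PowerSeries.X : PowerSeries F)]; abel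

set_option maxHeartbeats 1000000 in
/-- Right multiplication invariance: the subgroup gets conjugated. -/
lemma Pprop_right (N : ℕ) (r : Matrix (Fin n) (Fin n) (LaurentSeries F))
    (g : (Matrix (Fin n) (Fin n) (PowerSeries F))ˣ) (h : Pprop F n N r) :
    Pprop F n N (r * matK F n (g : Matrix (Fin n) (Fin n) (PowerSeries F))) := by
  obtain ⟨U', ⟨hU1, hU2⟩, h⟩ := h
  set φ : Matrix (Fin n) (Fin n) (PowerSeries F) →+* Matrix (Fin n) (Fin n) F :=
    (PowerSeries.constantCoeff (R := F)).mapMatrix with hφ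
  set c : (Matrix (Fin n) (Fin n) F)ˣ := Units.map φ.toMonoidHom g with hc
  set cP : (Matrix (Fin n) (Fin n) (PowerSeries F))ˣ :=
    Units.map (ΨP F n).toMonoidHom c with hcP
  set A : Matrix (Fin n) (Fin n) (PowerSeries F) := ↑(g * cP⁻¹) with hAdef
  have hφΨ : ∀ B : Matrix (Fin n) (Fin n) F, φ (ΨP F n B) = B := by
    intro B; ext i j
    simp [hφ, ΨP, Matrix.map_apply, PowerSeries.algebraMap_apply]
  have hcPinv : (↑(cP⁻¹) : Matrix (Fin n) (Fin n) (PowerSeries F))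
      = ΨP F n ↑(c⁻¹) := by
    rw [hcP, ← map_inv]; rfl
  have hAconst : φ A = 1 := by
    rw [hAdef, Units.val_mul, map_mul, hcPinv, hφΨ]
    have hgc : φ (↑g) = ↑c := rfl
    rw [hgc, ← Units.val_mul, mul_inv_cancel, Units.val_one]
  have hkex : ∀ i j, ∃ q, (A - 1) i j = PowerSeries.X * q := by
    intro i j
    have h0 : PowerSeries.constantCoeff (R := F) ((A - 1) i j) = 0 := by
      have hz : φ (A - 1) = 0 := by rw [map_sub, hAconst, map_one, sub_self]
      have hz2 := congrFun (congrFun (congrArg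
        (fun M : Matrix (Fin n) (Fin n) F => M) hz) i) j
      simpa [hφ, RingHom.mapMatrix_apply, Matrix.map_apply] using hz2
    exact PowerSeries.X_dvd_iff.mpr h0
  choose k0 hk using hkex
  set k : Matrix (Fin n) (Fin n) (PowerSeries F) := Matrix.of k0 with hkdef
  have hA : A = 1 + (PowerSeries.X : PowerSeries F) • k := by
    ext i j
    have h1 := hk i j
    rw [Matrix.sub_apply, sub_eq_iff_eq_add] at h1
    rw [h1]
    simp only [Matrix.add_apply, Matrix.smul_apply, smul_eq_mul, hkdef, Matrix.of_apply]
    ring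
  have hA2 : (↑g : Matrix (Fin n) (Fin n) (PowerSeries F)) = A * ΨP F n ↑c := by
    have hcc : ΨP F n ↑c = ↑cP := rfl
    rw [hcc, hAdef, ← Units.val_mul, inv_mul_cancel_right]
  have hA3 : (↑g : Matrix (Fin n) (Fin n) (PowerSeries F)) * ΨP F n ↑(c⁻¹) = A := by
    rw [← hcPinv, hAdef, Units.val_mul]
  clear_value A k c cP
  clear hAdef hkdef hk hAconst hφΨ hcPinv hc hcP
  refine ⟨U'.map (MulAut.conj c⁻¹).toMonoidHom, ⟨?_, ?_⟩, ?_⟩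
  · rw [Ne, Subgroup.map_eq_bot_iff_of_injective _ (MulAut.conj c⁻¹).injective]
    exact hU1
  · rintro u hu
    rw [Subgroup.mem_map] at hu
    obtain ⟨v, hv, hvu⟩ := hu
    have huu : u = c⁻¹ * v * c := by
      rw [← hvu]; simp [MulAut.conj_apply]
    have hu' : (↑u : Matrix (Fin n) (Fin n) F)
        = (↑(c⁻¹) : Matrix (Fin n) (Fin n) F)
          * ((↑v : Matrix (Fin n) (Fin n) F) * (↑c : Matrix (Fin n) (Fin n) F)) := by
      rw [huu]; simp [Units.val_mul, mul_assoc]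
    have e : (↑u : Matrix (Fin n) (Fin n) F) - 1
        = (↑(c⁻¹) : Matrix (Fin n) (Fin n) F)
          * ((↑v : Matrix (Fin n) (Fin n) F) - 1) * (↑c : Matrix (Fin n) (Fin n) F) := by
      rw [hu', mul_sub, sub_mul, mul_one, Units.inv_mul, ← mul_assoc]
    rw [e, Units.conj_pow', hU2 v hv, mul_zero, zero_mul]
  · rintro u hu
    rw [Subgroup.mem_map] at hu
    obtain ⟨v, hv, hvu⟩ := hu
    obtain ⟨m₁, m₂, hm⟩ := h v hv
    have huu : u = c⁻¹ * v * c := by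
      rw [← hvu]; simp [MulAut.conj_apply]
    have hu' : (↑u : Matrix (Fin n) (Fin n) F)
        = (↑(c⁻¹) : Matrix (Fin n) (Fin n) F)
          * ((↑v : Matrix (Fin n) (Fin n) F) * (↑c : Matrix (Fin n) (Fin n) F)) := by
      rw [huu]; simp [Units.val_mul, mul_assoc]
    set w : Matrix (Fin n) (Fin n) (PowerSeries F) :=
      (ΨP F n ↑v - 1) * ΨP F n ↑c with hw
    set gi : Matrix (Fin n) (Fin n) (PowerSeries F) := ↑(g⁻¹) with hgidef
    have hgi : (↑g : Matrix (Fin n) (Fin n) (PowerSeries F)) * gi = 1 := by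
      rw [hgidef, ← Units.val_mul, mul_inv_cancel, Units.val_one]
    refine ⟨gi * (m₁ * ΨP F n ↑c + k * w), m₂ * ΨP F n ↑c, ?_⟩
    have hgu : (↑g : Matrix (Fin n) (Fin n) (PowerSeries F)) * ΨP F n ↑u
        = ↑g + (w + (PowerSeries.X : PowerSeries F) • (k * w)) := by
      rw [hu', map_mul, map_mul, ← mul_assoc, hA3,
        show ((PowerSeries.X : PowerSeries F) • (k * w)) =
          ((PowerSeries.X : PowerSeries F) • k) * w from (smul_mul_assoc _ _ _).symm,
        hA, hw, hA2, hA]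
      generalize ((PowerSeries.X : PowerSeries F) • k) = kk
      noncomm_ring
    have hgm : (↑g : Matrix (Fin n) (Fin n) (PowerSeries F))
          * ((PowerSeries.X : PowerSeries F) • (gi * (m₁ * ΨP F n ↑c + k * w)))
        = (PowerSeries.X : PowerSeries F) • (m₁ * ΨP F n ↑c)
          + (PowerSeries.X : PowerSeries F) • (k * w) := by
      rw [mul_smul_comm, ← mul_assoc, hgi, one_mul, smul_add]
    simp only [matK_def, matFK_eq] at hm ⊢
    calc r * ΨK F n ↑g * ΨK F n (ΨP F n ↑u) - r * ΨK F n ↑g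
        = r * ΨK F n (↑g * ΨP F n ↑u - ↑g) := by
          rw [map_sub, map_mul, mul_sub, mul_assoc]
      _ = r * ΨK F n w + r * ΨK F n ((PowerSeries.X : PowerSeries F) • (k * w)) := by
          rw [hgu, add_sub_cancel_left, map_add, mul_add]
      _ = (r * ΨK F n (ΨP F n ↑v) - r) * ΨK F n (ΨP F n ↑c)
            + r * ΨK F n ((PowerSeries.X : PowerSeries F) • (k * w)) := by
          have hww : ΨK F n w = (ΨK F n (ΨP F n ↑v) - 1) * ΨK F n (ΨP F n ↑c) := by
            rw [hw, map_mul, map_sub, map_one]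
          rw [hww, sub_mul, one_mul, mul_sub, sub_mul, mul_assoc]
      _ = r * ΨK F n ((PowerSeries.X : PowerSeries F) • (m₁ * ΨP F n ↑c))
            + ΨK F n ((PowerSeries.X : PowerSeries F) ^ N • (m₂ * ΨP F n ↑c))
            + r * ΨK F n ((PowerSeries.X : PowerSeries F) • (k * w)) := by
          rw [hm, add_mul, mul_assoc, ← map_mul, ← map_mul, smul_mul_assoc, smul_mul_assoc]
      _ = r * ΨK F n ↑g
            * ΨK F n ((PowerSeries.X : PowerSeries F)
                • (gi * (m₁ * ΨP F n ↑c + k * w)))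
            + ΨK F n ((PowerSeries.X : PowerSeries F) ^ N • (m₂ * ΨP F n ↑c)) := by
          conv_rhs => rw [mul_assoc, ← map_mul, hgm, map_add, mul_add]
          abel

/-- Combined forward lemma. -/
lemma Pprop_comb (N : ℕ) (r : Matrix (Fin n) (Fin n) (LaurentSeries F))
    (g₁ g₂ : (Matrix (Fin n) (Fin n) (PowerSeries F))ˣ)
    (m : Matrix (Fin n) (Fin n) (PowerSeries F)) (h : Pprop F n N r) :
    Pprop F n N (matK F n (g₁ : Matrix (Fin n) (Fin n) (PowerSeries F)) * r *
        matK F n (g₂ : Matrix (Fin n) (Fin n) (PowerSeries F)) +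
        matK F n ((PowerSeries.X : PowerSeries F) ^ N • m)) := by
  have h1 := Pprop_right F n N r g₂ h
  have h2 := Pprop_left F n N _ g₁ h1
  have h3 := Pprop_trans F n N _ m h2
  rwa [← mul_assoc] at h3

/-- The set `C_N` is invariant under left and right multiplication by
`GL_n(F[[t]])` and under translation by `t^N M_n(F[[t]])`:  `r ∈ C_N` iff
`g₁ r g₂ + t^N m ∈ C_N` for any `g₁, g₂ ∈ GL_n(F[[t]])` and `m ∈ M_n(F[[t]])`. -/
theorem CN_biinvariant [CharZero F] (N : ℕ)
    (r : Matrix (Fin n) (Fin n) (LaurentSeries F))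
    (g₁ g₂ : (Matrix (Fin n) (Fin n) (PowerSeries F))ˣ)
    (m : Matrix (Fin n) (Fin n) (PowerSeries F)) :
    InCN F n N r ↔
      InCN F n N (matK F n (g₁ : Matrix (Fin n) (Fin n) (PowerSeries F)) * r *
        matK F n (g₂ : Matrix (Fin n) (Fin n) (PowerSeries F)) +
        matK F n ((PowerSeries.X : PowerSeries F) ^ N • m)) := by
  rw [InCN_iff, InCN_iff]
  apply not_congr
  constructor
  · exact Pprop_comb F n N r g₁ g₂ m
  · intro h
    have h1 := Pprop_comb F n N _ g₁⁻¹ g₂⁻¹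
      (-(((g₁⁻¹ : (Matrix (Fin n) (Fin n) (PowerSeries F))ˣ) :
          Matrix (Fin n) (Fin n) (PowerSeries F)) * m *
        ((g₂⁻¹ : (Matrix (Fin n) (Fin n) (PowerSeries F))ˣ) :
          Matrix (Fin n) (Fin n) (PowerSeries F)))) h
    have key : matK F n ((g₁⁻¹ : (Matrix (Fin n) (Fin n) (PowerSeries F))ˣ) :
          Matrix (Fin n) (Fin n) (PowerSeries F)) *
        (matK F n (g₁ : Matrix (Fin n) (Fin n) (PowerSeries F)) * r *
          matK F n (g₂ : Matrix (Fin n) (Fin n) (PowerSeries F)) +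
          matK F n ((PowerSeries.X : PowerSeries F) ^ N • m)) *
        matK F n ((g₂⁻¹ : (Matrix (Fin n) (Fin n) (PowerSeries F))ˣ) :
          Matrix (Fin n) (Fin n) (PowerSeries F)) +
        matK F n ((PowerSeries.X : PowerSeries F) ^ N •
          (-(((g₁⁻¹ : (Matrix (Fin n) (Fin n) (PowerSeries F))ˣ) :
              Matrix (Fin n) (Fin n) (PowerSeries F)) * m *
            ((g₂⁻¹ : (Matrix (Fin n) (Fin n) (PowerSeries F))ˣ) :
              Matrix (Fin n) (Fin n) (PowerSeries F))))) = r := by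
      simp only [matK_def]
      have e1 : ΨK F n ((↑(g₁⁻¹) : Matrix (Fin n) (Fin n) (PowerSeries F)))
          * ΨK F n (↑g₁ : Matrix (Fin n) (Fin n) (PowerSeries F)) = 1 := by
        rw [← map_mul, ← Units.val_mul, inv_mul_cancel, Units.val_one, map_one]
      have e2 : ΨK F n (↑g₂ : Matrix (Fin n) (Fin n) (PowerSeries F))
          * ΨK F n ((↑(g₂⁻¹) : Matrix (Fin n) (Fin n) (PowerSeries F))) = 1 := by
        rw [← map_mul, ← Units.val_mul, mul_inv_cancel, Units.val_one, map_one]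
      have e3 : ((PowerSeries.X : PowerSeries F) ^ N •
          (-((↑(g₁⁻¹) : Matrix (Fin n) (Fin n) (PowerSeries F)) * m *
            (↑(g₂⁻¹) : Matrix (Fin n) (Fin n) (PowerSeries F)))))
          = -((↑(g₁⁻¹) : Matrix (Fin n) (Fin n) (PowerSeries F)) *
            ((PowerSeries.X : PowerSeries F) ^ N • m) *
            (↑(g₂⁻¹) : Matrix (Fin n) (Fin n) (PowerSeries F))) := by
        rw [smul_neg, mul_smul_comm, smul_mul_assoc]
      rw [e3, map_neg, map_mul, map_mul]
      have expand : ΨK F n ((↑(g₁⁻¹) : Matrix (Fin n) (Fin n) (PowerSeries F))) *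
          (ΨK F n (↑g₁ : Matrix (Fin n) (Fin n) (PowerSeries F)) * r *
            ΨK F n (↑g₂ : Matrix (Fin n) (Fin n) (PowerSeries F)) +
            ΨK F n ((PowerSeries.X : PowerSeries F) ^ N • m)) *
          ΨK F n ((↑(g₂⁻¹) : Matrix (Fin n) (Fin n) (PowerSeries F)))
          = (ΨK F n ((↑(g₁⁻¹) : Matrix (Fin n) (Fin n) (PowerSeries F))) *
              ΨK F n (↑g₁ : Matrix (Fin n) (Fin n) (PowerSeries F))) * r *
            (ΨK F n (↑g₂ : Matrix (Fin n) (Fin n) (PowerSeries F)) *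
              ΨK F n ((↑(g₂⁻¹) : Matrix (Fin n) (Fin n) (PowerSeries F)))) +
            ΨK F n ((↑(g₁⁻¹) : Matrix (Fin n) (Fin n) (PowerSeries F))) *
              ΨK F n ((PowerSeries.X : PowerSeries F) ^ N • m) *
              ΨK F n ((↑(g₂⁻¹) : Matrix (Fin n) (Fin n) (PowerSeries F))) := by
        noncomm_ring
      rw [expand, e1, e2, one_mul, mul_one]
      abel
    rwa [key] at h1

end
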